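/- arXiv:2505.16925 — 5 statements merged into one kernel-verified Lean document; each statement's English description precedes it below -/
import Mathlib

section
/- Let (Ω, F, μ) be a probability space, α > 0, and let Y : Ω → ℝ be a random variable such that exp(-αY) is integrable. Let 𝒢 ⊆ F be a sub-σ-algebra, and set V* = -α⁻¹ log E[exp(-αY) | 𝒢] (a 𝒢-measurable random variable). Then for every 𝒢-measurable random variable V : Ω → ℝ such that exp(α(V − Y)) and V − Y are integrable, one has E[exp(α(V − Y)) − α(V − Y) − 1] ≥ E[exp(α(V* − Y)) − α(V* − Y) − 1]; that is, V* minimizes the expected Itakura–Saito loss among 𝒢-measurable predictors. -/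
open MeasureTheory Real

/-- The minimizer of the expected Itakura–Saito loss among 𝒢-measurable
predictors is the entropic value function
`V* = -α⁻¹ log E[exp(-αY) | 𝒢]` (Proposition 1 of the paper). -/
theorem itakura_saito_condexp_minimizer
    {Ω : Type*} {m₀ : MeasurableSpace Ω} (μ : Measure Ω) [IsProbabilityMeasure μ]
    {α : ℝ} (hα : 0 < α)
    (Y : Ω → ℝ) (hY : Integrable (fun ω => Real.exp (-α * Y ω)) μ)
    (𝒢 : MeasurableSpace Ω) (h𝒢 : 𝒢 ≤ m₀)
    (Vstar : Ω → ℝ)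
    (hVstar : Vstar = fun ω =>
      -α⁻¹ * Real.log ((μ[(fun ω' => Real.exp (-α * Y ω')) | 𝒢]) ω))
    (V : Ω → ℝ) (hVmeas : Measurable[𝒢] V)
    (hVint : Integrable (fun ω => Real.exp (α * (V ω - Y ω))) μ)
    (hVint' : Integrable (fun ω => V ω - Y ω) μ)
    (hVstarint : Integrable (fun ω => Real.exp (α * (Vstar ω - Y ω))) μ)
    (hVstarint' : Integrable (fun ω => Vstar ω - Y ω) μ) :
    ∫ ω, (Real.exp (α * (V ω - Y ω)) - α * (V ω - Y ω) - 1) ∂μ ≥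
      ∫ ω, (Real.exp (α * (Vstar ω - Y ω)) - α * (Vstar ω - Y ω) - 1) ∂μ := by
  letI : MeasurableSpace Ω := m₀
  set W : Ω → ℝ := fun ω => Real.exp (-α * Y ω) with hWdef
  set g : Ω → ℝ := μ[W|𝒢] with hgdef
  have hg_meas : StronglyMeasurable[𝒢] g := stronglyMeasurable_condExp
  have hg_int : Integrable g μ := integrable_condExp
  -- a.e. positivity of g
  have h0 : μ {ω | g ω ≤ 0} = 0 := by
    by_contra h
    set s : Set Ω := {ω | g ω ≤ 0} with hsdef
    have hs : MeasurableSet[𝒢] s := hg_meas.measurable measurableSet_Iic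
    have heqint : ∫ ω in s, g ω ∂μ = ∫ ω in s, W ω ∂μ :=
      setIntegral_condExp h𝒢 hY hs
    have hnonpos : ∫ ω in s, g ω ∂μ ≤ 0 :=
      setIntegral_nonpos (h𝒢 _ hs) (fun ω hω => hω)
    have hpos : 0 < ∫ ω in s, W ω ∂μ := by
      rw [setIntegral_pos_iff_support_of_nonneg_ae
        (Filter.Eventually.of_forall (fun ω => (Real.exp_pos _).le)) hY.integrableOn]
      have hsupp : Function.support W = Set.univ := by
        ext ω; simp [hWdef, Real.exp_ne_zero]
      rw [hsupp]
      simpa [Set.univ_inter] using (pos_iff_ne_zero).2 h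
    linarith [heqint ▸ hnonpos]
  have hg_pos : ∀ᵐ ω ∂μ, 0 < g ω := by
    rw [ae_iff]; simpa [not_lt] using h0
  -- Vstar identities
  have hVstar_log : ∀ ω, α * Vstar ω = -Real.log (g ω) := by
    intro ω
    rw [hVstar]
    simp only
    field_simp
  have hVstar_eq : ∀ᵐ ω ∂μ, Real.exp (α * Vstar ω) * g ω = 1 := by
    filter_upwards [hg_pos] with ω hω
    rw [hVstar_log, Real.exp_neg, Real.exp_log hω, inv_mul_cancel₀ hω.ne']
  -- factorizations
  have hfacV : (fun ω => Real.exp (α * (V ω - Y ω))) = (fun ω => Real.exp (α * V ω)) * W := by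
    funext ω; show _ = Real.exp _ * Real.exp _
    rw [← Real.exp_add]; ring_nf
  have hfacVs : (fun ω => Real.exp (α * (Vstar ω - Y ω)))
      = (fun ω => Real.exp (α * Vstar ω)) * W := by
    funext ω; show _ = Real.exp _ * Real.exp _
    rw [← Real.exp_add]; ring_nf
  have hmV : StronglyMeasurable[𝒢] (fun ω => Real.exp (α * V ω)) :=
    (Real.measurable_exp.comp (hVmeas.const_mul α)).stronglyMeasurable
  have hVsmeas : Measurable[𝒢] Vstar := by
    rw [hVstar]
    exact (Real.measurable_log.comp hg_meas.measurable).const_mul _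
  have hmVs : StronglyMeasurable[𝒢] (fun ω => Real.exp (α * Vstar ω)) :=
    (Real.measurable_exp.comp (hVsmeas.const_mul α)).stronglyMeasurable
  -- pull-out properties
  have hpullV : μ[(fun ω => Real.exp (α * V ω)) * W|𝒢]
      =ᵐ[μ] (fun ω => Real.exp (α * V ω)) * g :=
    condExp_mul_of_stronglyMeasurable_left hmV (hfacV ▸ hVint) hY
  have hpullVs : μ[(fun ω => Real.exp (α * Vstar ω)) * W|𝒢]
      =ᵐ[μ] (fun ω => Real.exp (α * Vstar ω)) * g :=
    condExp_mul_of_stronglyMeasurable_left hmVs (hfacVs ▸ hVstarint) hY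
  have hGint : Integrable (fun ω => Real.exp (α * V ω) * g ω) μ :=
    integrable_condExp.congr hpullV
  -- integral identities
  have hI1 : ∫ ω, Real.exp (α * (V ω - Y ω)) ∂μ = ∫ ω, Real.exp (α * V ω) * g ω ∂μ := by
    calc ∫ ω, Real.exp (α * (V ω - Y ω)) ∂μ
        = ∫ ω, ((fun ω => Real.exp (α * V ω)) * W) ω ∂μ := by rw [hfacV]
      _ = ∫ ω, (μ[(fun ω => Real.exp (α * V ω)) * W|𝒢]) ω ∂μ :=
          (integral_condExp h𝒢).symm
      _ = ∫ ω, Real.exp (α * V ω) * g ω ∂μ := integral_congr_ae hpullV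
  have hI2 : ∫ ω, Real.exp (α * (Vstar ω - Y ω)) ∂μ = 1 := by
    calc ∫ ω, Real.exp (α * (Vstar ω - Y ω)) ∂μ
        = ∫ ω, ((fun ω => Real.exp (α * Vstar ω)) * W) ω ∂μ := by rw [hfacVs]
      _ = ∫ ω, (μ[(fun ω => Real.exp (α * Vstar ω)) * W|𝒢]) ω ∂μ :=
          (integral_condExp h𝒢).symm
      _ = ∫ ω, Real.exp (α * Vstar ω) * g ω ∂μ := integral_congr_ae hpullVs
      _ = ∫ ω, (1 : ℝ) ∂μ := integral_congr_ae hVstar_eq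
      _ = 1 := by simp
  -- key pointwise inequality
  have hkey : 0 ≤ ∫ ω, (Real.exp (α * V ω) * g ω - 1
      - (α * (V ω - Y ω) - α * (Vstar ω - Y ω))) ∂μ := by
    refine integral_nonneg_of_ae ?_
    filter_upwards [hg_pos] with ω hω
    have hx : 0 < Real.exp (α * V ω) * g ω := mul_pos (Real.exp_pos _) hω
    have hlog : Real.log (Real.exp (α * V ω) * g ω)
        = α * (V ω - Y ω) - α * (Vstar ω - Y ω) := by
      rw [Real.log_mul (Real.exp_ne_zero _) hω.ne', Real.log_exp]
      linear_combination hVstar_log ω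
    have := Real.log_le_sub_one_of_pos hx
    rw [hlog] at this
    simp only [Pi.zero_apply]
    linarith
  -- split integrals and conclude
  have hkey' : 0 ≤ (∫ ω, Real.exp (α * V ω) * g ω ∂μ) - 1
      - (α * (∫ ω, (V ω - Y ω) ∂μ) - α * (∫ ω, (Vstar ω - Y ω) ∂μ)) := by
    have hsplit : ∫ ω, (Real.exp (α * V ω) * g ω - 1
        - (α * (V ω - Y ω) - α * (Vstar ω - Y ω))) ∂μ
        = (∫ ω, Real.exp (α * V ω) * g ω ∂μ) - 1
          - (α * (∫ ω, (V ω - Y ω) ∂μ) - α * (∫ ω, (Vstar ω - Y ω) ∂μ)) := by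
      have hi1 : Integrable (fun ω => Real.exp (α * V ω) * g ω - 1) μ :=
        hGint.sub (integrable_const 1)
      have hi2 : Integrable (fun ω => α * (V ω - Y ω) - α * (Vstar ω - Y ω)) μ :=
        (hVint'.const_mul α).sub (hVstarint'.const_mul α)
      have hi3 : Integrable (fun ω => α * (V ω - Y ω)) μ := hVint'.const_mul α
      have hi4 : Integrable (fun ω => α * (Vstar ω - Y ω)) μ := hVstarint'.const_mul α
      rw [integral_sub hi1 hi2, integral_sub hGint (integrable_const 1),
        integral_sub hi3 hi4, integral_const_mul, integral_const_mul, integral_const]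
      simp
    linarith [hsplit ▸ hkey]
  have hL : ∫ ω, (Real.exp (α * (V ω - Y ω)) - α * (V ω - Y ω) - 1) ∂μ
      = (∫ ω, Real.exp (α * (V ω - Y ω)) ∂μ) - α * (∫ ω, (V ω - Y ω) ∂μ) - 1 := by
    have hi1 : Integrable (fun ω => Real.exp (α * (V ω - Y ω)) - α * (V ω - Y ω)) μ :=
      hVint.sub (hVint'.const_mul α)
    have hi3 : Integrable (fun ω => α * (V ω - Y ω)) μ := hVint'.const_mul α
    rw [integral_sub hi1 (integrable_const 1), integral_sub hVint hi3,
      integral_const_mul, integral_const]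
    simp
  have hR : ∫ ω, (Real.exp (α * (Vstar ω - Y ω)) - α * (Vstar ω - Y ω) - 1) ∂μ
      = (∫ ω, Real.exp (α * (Vstar ω - Y ω)) ∂μ) - α * (∫ ω, (Vstar ω - Y ω) ∂μ) - 1 := by
    have hi1 : Integrable (fun ω => Real.exp (α * (Vstar ω - Y ω)) - α * (Vstar ω - Y ω)) μ :=
      hVstarint.sub (hVstarint'.const_mul α)
    have hi3 : Integrable (fun ω => α * (Vstar ω - Y ω)) μ := hVstarint'.const_mul α
    rw [integral_sub hi1 (integrable_const 1), integral_sub hVstarint hi3,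
      integral_const_mul, integral_const]
    simp
  rw [ge_iff_le, hL, hR, hI1, hI2]
  linarith
end

section
/- Let α > 0 and let Y be a real random variable on a probability space such that Y and exp(−αY) are integrable. Then the function c ↦ E[exp(α(c − Y)) − α(c − Y) − 1] on ℝ attains its unique minimum at c* = −α⁻¹ log E[exp(−αY)], i.e., at the entropic certainty equivalent EXD_α[Y]. -/
open MeasureTheory ProbabilityTheory Real

/-!
Since `E[exp(α(c − Y))] = exp(αc) · E[exp(−αY)]`, the loss is `exp(α(c − c*)) − αc + const`,
where `c*` is exactly the point with `exp(αc*) · E[exp(−αY)] = 1`. Hence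
`L c − L c* = φ(α(c − c*))` with `φ t = exp t − t − 1`, which is positive except at `t = 0`.
-/

lemma integral_exp_mul_sub_sub_mul_sub_sub_one {Ω : Type*} {m₀ : MeasurableSpace Ω}
    {μ : Measure Ω} [IsProbabilityMeasure μ] {α : ℝ} {Y : Ω → ℝ} (hYint : Integrable Y μ)
    (hY : Integrable (fun ω => exp (-α * Y ω)) μ) (c : ℝ) :
    ∫ ω, (exp (α * (c - Y ω)) - α * (c - Y ω) - 1) ∂μ
      = exp (α * c) * mgf Y μ (-α) - α * c + α * μ[Y] - 1 := by
  have hsplit : ∀ ω, exp (α * (c - Y ω)) - α * (c - Y ω) - 1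
      = (exp (α * c) * exp (-α * Y ω) + α * Y ω) - (α * c + 1) := by
    intro ω
    rw [← exp_add]
    ring_nf
  simp_rw [hsplit]
  have hexp : Integrable (fun ω => exp (α * c) * exp (-α * Y ω)) μ := hY.const_mul _
  have hlin : Integrable (fun ω => α * Y ω) μ := hYint.const_mul α
  have hsum : Integrable (fun ω => exp (α * c) * exp (-α * Y ω) + α * Y ω) μ := hexp.add hlin
  rw [integral_sub hsum (integrable_const _), integral_add hexp hlin, integral_const_mul,
    integral_const_mul, integral_const, probReal_univ, one_smul, mgf]
  ring

lemma exp_mul_sub_neg_inv_mul_log {α M : ℝ} (hα : α ≠ 0) (hM : 0 < M) (c : ℝ) :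
    exp (α * (c - -α⁻¹ * log M)) = exp (α * c) * M := by
  rw [show α * (c - -α⁻¹ * log M) = α * c + log M by field_simp; ring, exp_add, exp_log hM]

/-- The unconditional form of Proposition 1: on ℝ, the expected Itakura–Saito
loss `c ↦ E[exp(α(c − Y)) − α(c − Y) − 1]` attains its unique minimum at the
entropic certainty equivalent `c* = −α⁻¹ log E[exp(−αY)]`. -/
theorem itakura_saito_unconditional_minimizer
    {Ω : Type*} {m₀ : MeasurableSpace Ω} (μ : Measure Ω) [IsProbabilityMeasure μ]
    {α : ℝ} (hα : 0 < α)
    (Y : Ω → ℝ) (hYint : Integrable Y μ)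
    (hY : Integrable (fun ω => Real.exp (-α * Y ω)) μ)
    (L : ℝ → ℝ)
    (hL : L = fun c => ∫ ω, (Real.exp (α * (c - Y ω)) - α * (c - Y ω) - 1) ∂μ)
    (cstar : ℝ)
    (hcstar : cstar = -α⁻¹ * Real.log (∫ ω, Real.exp (-α * Y ω) ∂μ)) :
    (∀ c : ℝ, L cstar ≤ L c) ∧ (∀ c : ℝ, c ≠ cstar → L cstar < L c) := by
  have hL' : ∀ c, L c = exp (α * (c - cstar)) - α * c + α * μ[Y] - 1 := fun c => by
    simp only [hL]
    rw [integral_exp_mul_sub_sub_mul_sub_sub_one hYint hY, hcstar,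
      exp_mul_sub_neg_inv_mul_log (M := ∫ ω, exp (-α * Y ω) ∂μ) hα.ne' (mgf_pos hY), mgf]
  have hgap : ∀ c, L c - L cstar = exp (α * (c - cstar)) - α * (c - cstar) - 1 := fun c => by
    rw [hL', hL', sub_self, mul_zero, exp_zero]
    ring
  refine ⟨fun c => ?_, fun c hc => ?_⟩
  · linarith [hgap c, add_one_le_exp (α * (c - cstar))]
  · linarith [hgap c, add_one_lt_exp (mul_ne_zero hα.ne' (sub_ne_zero.mpr hc))]
end

section
/- Let α > 0 and let Y be a real random variable such that exp(−2αY) is integrable. Then the function c ↦ E[(exp(−αc) − exp(−αY))²] on ℝ attains its unique minimum at c* = −α⁻¹ log E[exp(−αY)], i.e., at the entropic certainty equivalent EXD_α[Y]. -/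
/-!
With `f = exp (-α Y)` and `t = exp (-α c)`, the loss is the mean squared error `E[(t - f)²]`,
which by the bias–variance decomposition equals `(t - E f)² + Var f`. As `E f > 0` and
`c ↦ exp (-α c)` is injective, it is minimized exactly when `exp (-α c) = E f`, i.e. at `c*`.
-/

open MeasureTheory ProbabilityTheory Real

section

variable {Ω : Type*} {m₀ : MeasurableSpace Ω} {μ : Measure Ω}

lemma memLp_two_exp_of_integrable_exp_two_mul {g : Ω → ℝ}
    (hg : Integrable (fun ω => exp (2 * g ω)) μ) : MemLp (fun ω => exp (g ω)) 2 μ := by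
  have hsq : ∀ ω, exp (g ω) ^ 2 = exp (2 * g ω) := fun ω => by
    rw [← exp_nat_mul]; norm_num
  have hmeas : AEStronglyMeasurable (fun ω => exp (g ω)) μ := by
    convert continuous_sqrt.comp_aestronglyMeasurable hg.aestronglyMeasurable using 1
    ext ω
    rw [← hsq, sqrt_sq (exp_pos _).le]
  exact (memLp_two_iff_integrable_sq hmeas).2 (by simpa only [hsq] using hg)

lemma integral_const_sub_sq [IsProbabilityMeasure μ] {X : Ω → ℝ} (hX : MemLp X 2 μ) (t : ℝ) :
    ∫ ω, (t - X ω) ^ 2 ∂μ = (t - μ[X]) ^ 2 + Var[X; μ] := by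
  have htX : MemLp (fun ω => t - X ω) 2 μ := (memLp_const t).sub hX
  have hmean : μ[fun ω => t - X ω] = t - μ[X] := by
    rw [integral_sub (integrable_const t) (hX.integrable one_le_two), integral_const, probReal_univ,
      one_smul]
  have hvar := variance_eq_sub htX
  rw [variance_const_sub hX.aestronglyMeasurable, hmean] at hvar
  simp only [Pi.pow_apply] at hvar
  linarith

end

lemma exp_neg_mul_neg_inv_mul_log {α m : ℝ} (hα : α ≠ 0) (hm : 0 < m) :
    exp (-α * (-α⁻¹ * log m)) = m := by
  rw [show -α * (-α⁻¹ * log m) = log m by field_simp, exp_log hm]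

/-- The exponential MSE loss `c ↦ E[(exp(−αc) − exp(−αY))²]` attains its
unique minimum at the entropic certainty equivalent
`c* = −α⁻¹ log E[exp(−αY)]`. -/
theorem exponential_mse_minimizer
    {Ω : Type*} {m₀ : MeasurableSpace Ω} (μ : Measure Ω) [IsProbabilityMeasure μ]
    {α : ℝ} (hα : 0 < α)
    (Y : Ω → ℝ) (hY : Integrable (fun ω => Real.exp (-(2 * α) * Y ω)) μ)
    (L : ℝ → ℝ)
    (hL : L = fun c => ∫ ω, (Real.exp (-α * c) - Real.exp (-α * Y ω)) ^ 2 ∂μ)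
    (cstar : ℝ)
    (hcstar : cstar = -α⁻¹ * Real.log (∫ ω, Real.exp (-α * Y ω) ∂μ)) :
    (∀ c : ℝ, L cstar ≤ L c) ∧ (∀ c : ℝ, c ≠ cstar → L cstar < L c) := by
  have hf : MemLp (fun ω => exp (-α * Y ω)) 2 μ :=
    memLp_two_exp_of_integrable_exp_two_mul (hY.congr (.of_forall fun ω => by ring_nf))
  set m := ∫ ω, exp (-α * Y ω) ∂μ
  have hL' : ∀ c, L c = (exp (-α * c) - m) ^ 2 + Var[fun ω => exp (-α * Y ω); μ] := fun c =>
    hL ▸ integral_const_sub_sq hf _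
  have hstar : exp (-α * cstar) = m :=
    hcstar ▸ exp_neg_mul_neg_inv_mul_log hα.ne' (integral_exp_pos (hf.integrable one_le_two))
  refine ⟨fun c => ?_, fun c hc => ?_⟩
  · rw [hL', hL', hstar, sub_self]
    simpa using sq_nonneg (exp (-α * c) - m)
  · have hne : exp (-α * c) - m ≠ 0 := by
      rw [← hstar, sub_ne_zero]
      exact exp_injective.ne ((mul_right_injective₀ (neg_ne_zero.2 hα.ne')).ne hc)
    rw [hL', hL', hstar, sub_self]
    simpa using sq_pos_of_ne_zero hne
end

section
/- Let α > 0, μ > 0, σ > 0, let Z₁, …, Z_T be i.i.d. Gaussian random variables with mean μ and variance σ², and let 𝒢_t = σ(Z₁, …, Z_t) (with 𝒢₀ trivial). Then for every bounded stochastic process (a_t)_{t=0}^{T−1} with each a_t measurable with respect to 𝒢_t, one has EXD_α[ Σ_{t=0}^{T−1} a_t Z_{t+1} ] ≤ T·μ²/(2ασ²), and equality holds for the constant strategy a_t ≡ μ/(ασ²). In particular, the optimal risk-averse value at time 0 is V* = Tμ²/(2ασ²). -/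
open MeasureTheory ProbabilityTheory Real
open scoped NNReal ENNReal

/-!
Conditionally on `𝒢 t`, the increment `Z (t + 1)` is still `𝒩(m, σ²)`, so one period contributes the
factor `E[exp (b Z) | 𝒢 t] = exp (m b + σ² b² / 2)` with `b = -α a t` an `𝒢 t`-measurable slope.
This quadratic in `b` is at least `-m² / (2σ²)`, attained at `a t = m / (ασ²)`. Peeling off the
periods one by one bounds `E exp (-α ∑ a t Z (t + 1))` below by `exp (-T m² / (2σ²))`; for the
constant strategy the sum is a sum of independent Gaussians and the bound is an equality.
-/

lemma lintegral_ofReal_exp_mul_gaussianReal (m : ℝ) (v : ℝ≥0) (t : ℝ) :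
    ∫⁻ x, ENNReal.ofReal (rexp (t * x)) ∂gaussianReal m v
      = ENNReal.ofReal (rexp (m * t + v * t ^ 2 / 2)) := by
  rw [← ofReal_integral_eq_lintegral_ofReal (integrable_exp_mul_gaussianReal t)
    (ae_of_all _ fun _ => (exp_pos _).le)]
  exact congrArg ENNReal.ofReal (congr_fun mgf_id_gaussianReal t)

lemma ProbabilityTheory.IndepFun.lintegral_comp_eq_lintegral_lintegral_map
    {Ω β γ : Type*} {mΩ : MeasurableSpace Ω} {mβ : MeasurableSpace β} {mγ : MeasurableSpace γ}
    {P : Measure Ω} [IsFiniteMeasure P] {W : Ω → β} {X : Ω → γ}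
    (hW : Measurable W) (hX : Measurable X) (hWX : IndepFun W X P)
    {F : β × γ → ℝ≥0∞} (hF : Measurable F) :
    ∫⁻ ω, F (W ω, X ω) ∂P = ∫⁻ ω, ∫⁻ x, F (W ω, x) ∂(P.map X) ∂P := by
  rw [← lintegral_map hF (hW.prodMk hX),
    (indepFun_iff_map_prod_eq_prod_map_map hW.aemeasurable hX.aemeasurable).1 hWX,
    lintegral_prod _ hF.aemeasurable, lintegral_map hF.lintegral_prod_right' hW]

lemma lintegral_exp_add_mul_of_indep_gaussianReal {Ω : Type*} {𝓕 m₀ : MeasurableSpace Ω}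
    (h𝓕 : 𝓕 ≤ m₀) {P : Measure Ω} [IsFiniteMeasure P]
    {S b X : Ω → ℝ} (hS : Measurable[𝓕] S) (hb : Measurable[𝓕] b) (hX : Measurable X)
    (hindep : Indep 𝓕 (MeasurableSpace.comap X inferInstance) P)
    {m : ℝ} {v : ℝ≥0} (hXgauss : P.map X = gaussianReal m v) :
    ∫⁻ ω, ENNReal.ofReal (rexp (S ω + b ω * X ω)) ∂P
      = ∫⁻ ω, ENNReal.ofReal (rexp (S ω + (m * b ω + v * b ω ^ 2 / 2))) ∂P := by
  have hW : Measurable[𝓕] fun ω => (S ω, b ω) := hS.prodMk hb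
  have hWX : IndepFun (fun ω => (S ω, b ω)) X P := indep_of_indep_of_le_left hindep hW.comap_le
  have hF : Measurable fun p : (ℝ × ℝ) × ℝ => ENNReal.ofReal (rexp (p.1.1 + p.1.2 * p.2)) := by
    fun_prop
  rw [hWX.lintegral_comp_eq_lintegral_lintegral_map (hW.mono h𝓕 le_rfl) hX hF, hXgauss]
  refine lintegral_congr fun ω => ?_
  simp only [exp_add (S ω), ENNReal.ofReal_mul (exp_pos _).le]
  rw [lintegral_const_mul _ (by fun_prop), lintegral_ofReal_exp_mul_gaussianReal]

lemma neg_sq_div_le_mul_add_mul_sq {v : ℝ} (hv : 0 < v) (m s : ℝ) :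
    -(m ^ 2 / (2 * v)) ≤ m * s + v * s ^ 2 / 2 := by
  have hsq : m * s + v * s ^ 2 / 2 + m ^ 2 / (2 * v) = (v * s + m) ^ 2 / (2 * v) := by
    field_simp
    ring
  have hnonneg : 0 ≤ (v * s + m) ^ 2 / (2 * v) := by positivity
  linarith

section Adapted

variable {Ω : Type*} {m₀ : MeasurableSpace Ω} {P : Measure Ω} [IsProbabilityMeasure P]
  {𝒢 : ℕ → MeasurableSpace Ω} {Z b : ℕ → Ω → ℝ}

lemma measurable_sum_range_mul_succ (h𝒢 : Monotone 𝒢) (hb : ∀ t, Measurable[𝒢 t] (b t))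
    (hZ : ∀ t, Measurable[𝒢 (t + 1)] (Z (t + 1))) (n : ℕ) :
    Measurable[𝒢 n] fun ω => ∑ t ∈ Finset.range n, b t ω * Z (t + 1) ω := by
  refine Finset.measurable_sum _ fun t ht => ?_
  have htn : t < n := Finset.mem_range.1 ht
  exact ((hb t).mono (h𝒢 htn.le) le_rfl).mul ((hZ t).mono (h𝒢 htn) le_rfl)

lemma ofReal_exp_le_lintegral_exp_sum_mul (h𝒢le : ∀ t, 𝒢 t ≤ m₀) (h𝒢 : Monotone 𝒢)
    (hZ : ∀ t, Measurable[𝒢 (t + 1)] (Z (t + 1)))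
    (hindep : ∀ t, Indep (𝒢 t) (MeasurableSpace.comap (Z (t + 1)) inferInstance) P)
    {m : ℝ} {v : ℝ≥0} (hv : 0 < (v : ℝ)) (hgauss : ∀ t, P.map (Z (t + 1)) = gaussianReal m v)
    (hb : ∀ t, Measurable[𝒢 t] (b t)) (n : ℕ) :
    ENNReal.ofReal (rexp (-(n * (m ^ 2 / (2 * v)))))
      ≤ ∫⁻ ω, ENNReal.ofReal (rexp (∑ t ∈ Finset.range n, b t ω * Z (t + 1) ω)) ∂P := by
  induction n with
  | zero => simp
  | succ n ih =>
    set q := m ^ 2 / (2 * v)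
    set S := fun ω => ∑ t ∈ Finset.range n, b t ω * Z (t + 1) ω
    have hS : Measurable[𝒢 n] S := measurable_sum_range_mul_succ h𝒢 hb hZ n
    have hstep := lintegral_exp_add_mul_of_indep_gaussianReal (h𝒢le n) hS (hb n)
      ((hZ n).mono (h𝒢le _) le_rfl) (hindep n) (hgauss n)
    calc ENNReal.ofReal (rexp (-((n + 1 : ℕ) * q)))
        = ENNReal.ofReal (rexp (-(n * q))) * ENNReal.ofReal (rexp (-q)) := by
          rw [← ENNReal.ofReal_mul (exp_pos _).le, ← exp_add]
          push_cast
          ring_nf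
      _ ≤ (∫⁻ ω, ENNReal.ofReal (rexp (S ω)) ∂P) * ENNReal.ofReal (rexp (-q)) := by gcongr
      _ = ∫⁻ ω, ENNReal.ofReal (rexp (S ω + -q)) ∂P := by
          rw [← lintegral_mul_const _ (hS.mono (h𝒢le n) le_rfl).exp.ennreal_ofReal]
          simp only [exp_add, ENNReal.ofReal_mul (exp_pos _).le]
      _ ≤ ∫⁻ ω, ENNReal.ofReal (rexp (S ω + (m * b n ω + v * b n ω ^ 2 / 2))) ∂P := by
          gcongr with ω
          exact neg_sq_div_le_mul_add_mul_sq hv m (b n ω)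
      _ = ∫⁻ ω, ENNReal.ofReal (rexp (∑ t ∈ Finset.range (n + 1), b t ω * Z (t + 1) ω)) ∂P := by
          simp only [hstep.symm, S, Finset.sum_range_succ]

end Adapted

/-- When the exponential moment is infinite the Bochner integral is `0` and `log 0 = 0`, whence
`r ≤ 0`. -/
lemma le_log_integral_exp_of_ofReal_exp_le_lintegral {Ω : Type*} {m₀ : MeasurableSpace Ω}
    {P : Measure Ω} {Y : Ω → ℝ} (hY : AEMeasurable Y P) {r : ℝ} (hr : r ≤ 0)
    (h : ENNReal.ofReal (rexp r) ≤ ∫⁻ ω, ENNReal.ofReal (rexp (Y ω)) ∂P) :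
    r ≤ log (∫ ω, rexp (Y ω) ∂P) := by
  rw [integral_eq_lintegral_of_nonneg_ae (ae_of_all _ fun _ => (exp_pos _).le)
    hY.exp.aestronglyMeasurable]
  rcases eq_or_ne (∫⁻ ω, ENNReal.ofReal (rexp (Y ω)) ∂P) ∞ with htop | htop
  · simpa [htop] using hr
  · have hexp : rexp r ≤ (∫⁻ ω, ENNReal.ofReal (rexp (Y ω)) ∂P).toReal :=
      (ENNReal.ofReal_le_iff_le_toReal htop).1 h
    exact (le_log_iff_exp_le ((exp_pos r).trans_le hexp)).2 hexp

lemma ProbabilityTheory.iIndepFun.mgf_sum_of_map_eq_gaussianReal {Ω ι : Type*}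
    {m₀ : MeasurableSpace Ω} {P : Measure Ω} {X : ι → Ω → ℝ} (hindep : iIndepFun X P)
    (hX : ∀ i, Measurable (X i)) {m : ℝ} {v : ℝ≥0} (hgauss : ∀ i, P.map (X i) = gaussianReal m v)
    (s : Finset ι) (t : ℝ) :
    mgf (∑ i ∈ s, X i) P t = rexp (s.card * (m * t + v * t ^ 2 / 2)) := by
  rw [hindep.mgf_sum hX, Finset.prod_congr rfl fun i _ => mgf_gaussianReal (hgauss i) t,
    Finset.prod_const, exp_nat_mul]

lemma ProbabilityTheory.iIndepFun.indep_biSup_comap {Ω ι β : Type*} {m₀ : MeasurableSpace Ω}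
    {mβ : MeasurableSpace β} {P : Measure Ω} {X : ι → Ω → β} (hindep : iIndepFun X P)
    (hX : ∀ i, Measurable (X i)) {s : Set ι} {j : ι} (hj : j ∉ s) :
    Indep (⨆ i ∈ s, MeasurableSpace.comap (X i) mβ) (MeasurableSpace.comap (X j) mβ) P := by
  simpa using indep_iSup_of_disjoint (fun i => (hX i).comap_le) hindep.iIndep
    (Set.disjoint_singleton_right.2 hj)

section NaturalFiltration

variable {Ω β : Type*} {m₀ : MeasurableSpace Ω} {mβ : MeasurableSpace β} {Z : ℕ → Ω → β}

lemma biSup_comap_Icc_le (hZ : ∀ i, Measurable (Z i)) (t : ℕ) :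
    ⨆ i ∈ Set.Icc 1 t, MeasurableSpace.comap (Z i) mβ ≤ m₀ :=
  iSup₂_le fun i _ => (hZ i).comap_le

lemma monotone_biSup_comap_Icc :
    Monotone fun t => ⨆ i ∈ Set.Icc 1 t, MeasurableSpace.comap (Z i) mβ :=
  fun _ _ hst => biSup_mono fun _ hi => ⟨hi.1, hi.2.trans hst⟩

lemma measurable_biSup_comap_Icc_succ (t : ℕ) :
    Measurable[⨆ i ∈ Set.Icc 1 (t + 1), MeasurableSpace.comap (Z i) mβ] (Z (t + 1)) :=
  measurable_iff_comap_le.2 <|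
    le_biSup (fun i => MeasurableSpace.comap (Z i) mβ) ⟨t.succ_pos, le_rfl⟩

end NaturalFiltration

theorem entropic_gaussian_multiperiod_value_general
    {Ω : Type*} {m₀ : MeasurableSpace Ω} (P : Measure Ω) [IsProbabilityMeasure P]
    {α : ℝ} (hα : 0 < α)
    {m σ : ℝ} (hσ : 0 < σ)
    (T : ℕ)
    (Z : ℕ → Ω → ℝ) (hZmeas : ∀ t, Measurable (Z t))
    (hZindep : iIndepFun (m := fun _ => Real.measurableSpace) Z P)
    (hZgauss : ∀ t, Measure.map (Z t) P = gaussianReal m ⟨σ ^ 2, sq_nonneg σ⟩)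
    (𝒢 : ℕ → MeasurableSpace Ω)
    (h𝒢 : ∀ t, 𝒢 t = ⨆ i ∈ Set.Icc 1 t, MeasurableSpace.comap (Z i) Real.measurableSpace)
    (EXD : (Ω → ℝ) → ℝ)
    (hEXD : EXD = fun X => -α⁻¹ * Real.log (∫ ω, Real.exp (-α * X ω) ∂P)) :
    (∀ a : ℕ → Ω → ℝ,
      (∀ t, Measurable[𝒢 t] (a t)) →
      (∀ t, ∃ C : ℝ, ∀ ω, |a t ω| ≤ C) →
      EXD (fun ω => ∑ t ∈ Finset.range T, a t ω * Z (t + 1) ω) ≤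
        T * m ^ 2 / (2 * α * σ ^ 2)) ∧
    EXD (fun ω => ∑ t ∈ Finset.range T, m / (α * σ ^ 2) * Z (t + 1) ω) =
      T * m ^ 2 / (2 * α * σ ^ 2) := by
  subst hEXD
  have h𝒢le : ∀ t, 𝒢 t ≤ m₀ := fun t => h𝒢 t ▸ biSup_comap_Icc_le hZmeas t
  have h𝒢mono : Monotone 𝒢 := funext h𝒢 ▸ monotone_biSup_comap_Icc
  have hZ𝒢 : ∀ t, Measurable[𝒢 (t + 1)] (Z (t + 1)) :=
    fun t => h𝒢 (t + 1) ▸ measurable_biSup_comap_Icc_succ t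
  have hindep : ∀ t, Indep (𝒢 t) (MeasurableSpace.comap (Z (t + 1)) _) P :=
    fun t => h𝒢 t ▸ hZindep.indep_biSup_comap hZmeas (by simp)
  set v : ℝ≥0 := ⟨σ ^ 2, sq_nonneg σ⟩
  have hvσ : (v : ℝ) = σ ^ 2 := rfl
  have hrate : (T : ℝ) * m ^ 2 / (2 * α * σ ^ 2) = α⁻¹ * (T * (m ^ 2 / (2 * v))) := by
    rw [hvσ]
    field_simp
  refine ⟨fun a ha _ => ?_, ?_⟩
  · have hb : ∀ t, Measurable[𝒢 t] fun ω => -α * a t ω := fun t => (ha t).const_mul _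
    have hlog := le_log_integral_exp_of_ofReal_exp_le_lintegral
      ((measurable_sum_range_mul_succ h𝒢mono hb hZ𝒢 T).mono (h𝒢le T) le_rfl).aemeasurable
      (by simp; positivity)
      (ofReal_exp_le_lintegral_exp_sum_mul h𝒢le h𝒢mono hZ𝒢 hindep
        (hvσ ▸ pow_pos hσ 2) (fun t => hZgauss _) hb T)
    simp only [mul_assoc, ← Finset.mul_sum] at hlog
    rw [hrate]
    nlinarith [mul_le_mul_of_nonneg_left hlog (inv_nonneg.2 hα.le)]
  · have hmgf := (hZindep.precomp Nat.succ_injective).mgf_sum_of_map_eq_gaussianReal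
      (fun t => hZmeas _) (fun t => hZgauss _) (Finset.range T) (-α * (m / (α * σ ^ 2)))
    simp only [mgf, Finset.sum_apply, Finset.card_range] at hmgf
    simp only [← Finset.mul_sum, ← mul_assoc, hmgf, log_exp, hrate]
    rw [hvσ]
    field_simp
    ring

/-- Multi-period Gaussian trading benchmark (Appendix A.1): for i.i.d. Gaussian
increments `Z 1, …, Z T` with mean `m > 0` and variance `σ² > 0` and any bounded
strategy `a` adapted to the filtration `𝒢 t = σ(Z 1, …, Z t)`, the entropic
certainty equivalent of the cumulative reward `∑_{t<T} a t · Z (t+1)` is at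
most `T·m²/(2ασ²)`, with equality for the constant strategy
`a t ≡ m/(ασ²)`. -/
theorem entropic_gaussian_multiperiod_value
    {Ω : Type*} {m₀ : MeasurableSpace Ω} (P : Measure Ω) [IsProbabilityMeasure P]
    {α : ℝ} (hα : 0 < α)
    {m σ : ℝ} (hm : 0 < m) (hσ : 0 < σ)
    (T : ℕ)
    (Z : ℕ → Ω → ℝ) (hZmeas : ∀ t, Measurable (Z t))
    (hZindep : iIndepFun (m := fun _ => Real.measurableSpace) Z P)
    (hZgauss : ∀ t, Measure.map (Z t) P = gaussianReal m ⟨σ ^ 2, sq_nonneg σ⟩)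
    (𝒢 : ℕ → MeasurableSpace Ω)
    (h𝒢 : ∀ t, 𝒢 t = ⨆ i ∈ Set.Icc 1 t, MeasurableSpace.comap (Z i) Real.measurableSpace)
    (EXD : (Ω → ℝ) → ℝ)
    (hEXD : EXD = fun X => -α⁻¹ * Real.log (∫ ω, Real.exp (-α * X ω) ∂P)) :
    (∀ a : ℕ → Ω → ℝ,
      (∀ t, Measurable[𝒢 t] (a t)) →
      (∀ t, ∃ C : ℝ, ∀ ω, |a t ω| ≤ C) →
      EXD (fun ω => ∑ t ∈ Finset.range T, a t ω * Z (t + 1) ω) ≤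
        T * m ^ 2 / (2 * α * σ ^ 2)) ∧
    EXD (fun ω => ∑ t ∈ Finset.range T, m / (α * σ ^ 2) * Z (t + 1) ω) =
      T * m ^ 2 / (2 * α * σ ^ 2) :=
  entropic_gaussian_multiperiod_value_general (m₀ := m₀) P hα hσ T Z hZmeas hZindep hZgauss 𝒢 h𝒢 EXD
    hEXD
end

section
/- Let α > 0 and define the softplus loss L(δ) = 2δα⁻¹ log(1 + exp(αδ)) + 2α⁻² li₂(−exp(αδ)) + π²/(6α²), where li₂(z) = −∫₀^z log(1 − t)/t dt is Spence's dilogarithm. Then L is differentiable on ℝ with L′(δ) = 2δ · exp(αδ)/(1 + exp(αδ)) = 2δ/(1 + exp(−αδ)) for every δ ∈ ℝ. -/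
/-!
Substituting `x = αδ`, the loss is `2α⁻²·(x log(1 + eˣ) + li₂(−eˣ))` plus a constant.
By the fundamental theorem of calculus `li₂′(z) = −log(1 − z)/z` for `z < 1`, `z ≠ 0`,
so `d/dx li₂(−eˣ) = −log(1 + eˣ)` cancels the product-rule term `log(1 + eˣ)` of
`x log(1 + eˣ)`, leaving `x·σ(x)` with `σ(x) = eˣ/(1 + eˣ) = 1/(1 + e⁻ˣ)` the sigmoid.
-/

open Real intervalIntegral

/-- Spence's dilogarithm `li₂(z) = −∫₀^z log(1 − t)/t dt`. -/
noncomputable def li2 (z : ℝ) : ℝ := -∫ t in (0 : ℝ)..z, Real.log (1 - t) / t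

lemma abs_log_one_sub_div_le {s t : ℝ} (hts : t ≤ s) (hs : s < 1) :
    |log (1 - t) / t| ≤ max 1 (1 - s)⁻¹ := by
  have hlog_le : log (1 - t) ≤ -t := by
    linarith [log_le_sub_one_of_pos (by linarith : 0 < 1 - t)]
  rcases lt_trichotomy t 0 with ht | rfl | ht
  · have hlog_nonneg : 0 ≤ log (1 - t) := log_nonneg (by linarith)
    refine le_max_of_le_left ?_
    rw [abs_div, abs_of_nonneg hlog_nonneg, abs_of_neg ht, div_le_one (by linarith)]
    exact hlog_le
  · simp
  · have hlog_ge : 1 - (1 - t)⁻¹ ≤ log (1 - t) := one_sub_inv_le_log_of_pos (by linarith)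
    refine le_max_of_le_right ?_
    rw [abs_div, abs_of_nonpos (by linarith), abs_of_pos ht, div_le_iff₀ ht]
    calc -log (1 - t) ≤ (1 - t)⁻¹ - 1 := by linarith
      _ = (1 - t)⁻¹ * t := by field_simp [show 1 - t ≠ 0 by linarith]; ring
      _ ≤ (1 - s)⁻¹ * t := by gcongr

lemma measurable_log_one_sub_div : Measurable fun t : ℝ => log (1 - t) / t := by
  fun_prop

lemma intervalIntegrable_log_one_sub_div {z : ℝ} (hz : z < 1) :
    IntervalIntegrable (fun t => log (1 - t) / t) MeasureTheory.volume 0 z := by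
  rw [intervalIntegrable_iff]
  refine MeasureTheory.Measure.integrableOn_of_bounded (M := max 1 (1 - max 0 z)⁻¹)
    measure_Ioc_lt_top.ne
    measurable_log_one_sub_div.aestronglyMeasurable ?_
  refine (MeasureTheory.ae_restrict_iff' measurableSet_uIoc).2 (.of_forall fun t ht => ?_)
  rw [Real.norm_eq_abs]
  exact abs_log_one_sub_div_le ht.2 (max_lt (by norm_num) hz)

lemma hasDerivAt_li2 {z : ℝ} (hz : z < 1) (hz₀ : z ≠ 0) :
    HasDerivAt li2 (-(log (1 - z) / z)) z := by
  have hcont : ContinuousAt (fun t => log (1 - t) / t) z :=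
    (ContinuousAt.log (f := fun t => 1 - t) (by fun_prop) (by linarith)).div continuousAt_id hz₀
  exact (integral_hasDerivAt_right (intervalIntegrable_log_one_sub_div hz)
    measurable_log_one_sub_div.stronglyMeasurable.stronglyMeasurableAtFilter hcont).neg

lemma hasDerivAt_li2_neg_exp (x : ℝ) :
    HasDerivAt (fun x => li2 (-exp x)) (-log (1 + exp x)) x := by
  refine ((hasDerivAt_li2 (by linarith [exp_pos x]) (neg_ne_zero.2 (exp_pos x).ne')).comp x
    (hasDerivAt_exp x).neg).congr_deriv ?_
  rw [sub_neg_eq_add]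
  field_simp [(exp_pos x).ne']

lemma exp_div_one_add_exp (x : ℝ) : exp x / (1 + exp x) = sigmoid x := by
  rw [sigmoid_def, exp_neg]
  field_simp [(exp_pos x).ne']
  ring

lemma hasDerivAt_log_one_add_exp (x : ℝ) :
    HasDerivAt (fun x => log (1 + exp x)) (sigmoid x) x := by
  rw [← exp_div_one_add_exp]
  exact ((hasDerivAt_exp x).const_add 1).log (by positivity)

lemma hasDerivAt_mul_log_one_add_exp_add_li2 (x : ℝ) :
    HasDerivAt (fun x => x * log (1 + exp x) + li2 (-exp x)) (x * sigmoid x) x := by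
  refine (((hasDerivAt_id x).mul (hasDerivAt_log_one_add_exp x)).add
    (hasDerivAt_li2_neg_exp x)).congr_deriv ?_
  simp only [id]
  ring

/-- The softplus loss
`L(δ) = 2δα⁻¹ log(1 + exp(αδ)) + 2α⁻² li₂(−exp(αδ)) + π²/(6α²)`
is differentiable with derivative
`L′(δ) = 2δ·exp(αδ)/(1 + exp(αδ)) = 2δ/(1 + exp(−αδ))`, the sigmoid-scaled
temporal-difference update of Mihatsch and Neuneier. -/
theorem softplus_loss_deriv {α : ℝ} (hα : 0 < α)
    (L : ℝ → ℝ)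
    (hL : L = fun δ => 2 * δ * α⁻¹ * Real.log (1 + Real.exp (α * δ)) +
      2 * α⁻¹ ^ 2 * li2 (-Real.exp (α * δ)) + π ^ 2 / (6 * α ^ 2)) :
    ∀ δ : ℝ,
      HasDerivAt L (2 * δ * Real.exp (α * δ) / (1 + Real.exp (α * δ))) δ ∧
      2 * δ * Real.exp (α * δ) / (1 + Real.exp (α * δ)) =
        2 * δ / (1 + Real.exp (-α * δ)) := by
  intro δ
  have hsig : 2 * δ * exp (α * δ) / (1 + exp (α * δ)) = 2 * δ * sigmoid (α * δ) := by
    rw [mul_div_assoc, exp_div_one_add_exp]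
  have hL' : L = fun δ => 2 * α⁻¹ ^ 2 *
      ((α * δ) * log (1 + exp (α * δ)) + li2 (-exp (α * δ))) + π ^ 2 / (6 * α ^ 2) := by
    rw [hL]; funext δ; field_simp
  refine ⟨?_, by rw [hsig, sigmoid_def, neg_mul]; ring⟩
  rw [hL', hsig]
  refine ((((hasDerivAt_mul_log_one_add_exp_add_li2 (α * δ)).comp δ
    ((hasDerivAt_id δ).const_mul α)).const_mul (2 * α⁻¹ ^ 2)).add_const
      (π ^ 2 / (6 * α ^ 2))).congr_deriv ?_
  field_simp
end
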